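/- Assume Ann_A(M) = 0. Every K-derivation d of the Lie algebra L = E_∞ can be written as d = ad(z) + d_{S,T} for some z ∈ L, S ∈ S_E, and T ∈ T_E. -/

import Mathlib

/- Purely even case of the paper's super setting: K a commutative unital ring
containing 1/2, A a commutative unital associative K-algebra, M an A-module
(hence also a K-module), q : M × M → A a symmetric A-bilinear form. -/

variable {K A M : Type*} [CommRing K] [Invertible (2 : K)] [CommRing A] [Algebra K A]
  [AddCommGroup M] [Module A M] [Module K M] [IsScalarTower K A M]
  [SMulCommClass A K M] [SMulCommClass K A M]

variable (K) in
/-- `a·id_M`, viewed as a `K`-linear endomorphism of `M`. -/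
def aId (a : A) : Module.End K M := a • (1 : Module.End K M)

variable (K) in
/-- `E_{m,n}(p) = q(n,p)·m − q(m,p)·n`, viewed as a `K`-linear endomorphism of `M`. -/
noncomputable def EmapK (q : M →ₗ[A] M →ₗ[A] A) (m n : M) : Module.End K M :=
  ((q n).restrictScalars K).smulRight m - ((q m).restrictScalars K).smulRight n

variable (K) in
/-- `osp(q)`, realized inside `End_K(M)`: the set of `A`-linear endomorphisms `x`
of `M` with `q(x(m),n) + q(x(n),m) = 0` for all `m, n`. -/
def ospK (q : M →ₗ[A] M →ₗ[A] A) : Set (Module.End K M) :=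
  {x | (∀ (a : A) (p : M), x (a • p) = a • x p) ∧
       ∀ m n : M, q (x m) n + q (x n) m = 0}

variable (K) in
/-- `eosp(q)`: the additive subgroup generated by the `E_{m,n}`. -/
noncomputable def eospK (q : M →ₗ[A] M →ₗ[A] A) : AddSubgroup (Module.End K M) :=
  AddSubgroup.closure {f | ∃ m n : M, f = EmapK K q m n}

variable (K) in
/-- The bracket on `E_∞ = A × M × M × E`, where `E` is a Lie subalgebra of
`osp(q)` containing `eosp(q)` (given as a `K`-submodule of `End_K(M)` closed
under commutators and containing all `E_{m,n}`):
`[(a,m,n,x),(a',m',n',x')] = (q(m,n') − q(n,m'),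
  a·m' + x(m') − a'·m − x'(m), −a·n' + x(n') + a'·n − x'(n),
  E_{m,n'} + E_{n,m'} + [x,x'])`. -/
noncomputable def brEinf (q : M →ₗ[A] M →ₗ[A] A) (E : Submodule K (Module.End K M))
    (hEe : ∀ m n : M, EmapK K q m n ∈ E)
    (hbr : ∀ x ∈ E, ∀ y ∈ E, x * y - y * x ∈ E)
    (u v : A × M × M × E) : A × M × M × E :=
  (q u.2.1 v.2.2.1 - q u.2.2.1 v.2.1,
   u.1 • v.2.1 + (u.2.2.2 : Module.End K M) v.2.1 - v.1 • u.2.1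
     - (v.2.2.2 : Module.End K M) u.2.1,
   -(u.1 • v.2.2.1) + (u.2.2.2 : Module.End K M) v.2.2.1 + v.1 • u.2.2.1
     - (v.2.2.2 : Module.End K M) u.2.2.1,
   ⟨EmapK K q u.2.1 v.2.2.1 + EmapK K q u.2.2.1 v.2.1 +
      ((u.2.2.2 : Module.End K M) * (v.2.2.2 : Module.End K M)
        - (v.2.2.2 : Module.End K M) * (u.2.2.2 : Module.End K M)),
    add_mem (add_mem (hEe _ _) (hEe _ _)) (hbr _ u.2.2.2.2 _ v.2.2.2.2)⟩)

variable (K) in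
/-- `S_E`: the set of `S ∈ End_K(M)` satisfying (S1) `[S, a·id_M] ∈ A·id_M`,
(S2) `[S, q(m,n)·id_M] = (q(S(m),n) + q(S(n),m))·id_M`, and (S3) `[S, E] ⊆ E`. -/
def SE (q : M →ₗ[A] M →ₗ[A] A) (E : Set (Module.End K M)) : Set (Module.End K M) :=
  {S | (∀ a : A, ∃ b : A, S * aId K a - aId K a * S = aId K b) ∧
       (∀ m n : M, S * aId K (q m n) - aId K (q m n) * S
          = aId K (q (S m) n + q (S n) m)) ∧
       (∀ x ∈ E, S * x - x * S ∈ E)}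

variable (K) in
/-- `T_E`: the set of `T ∈ End_K(M)` satisfying (T1) `[T, a·id_M] ∈ E`,
(T2) `[T, q(m,n)·id_M] = E_{T(m),n} + E_{T(n),m}`, and (T3) `[T, E] ⊆ A·id_M`. -/
def TE (q : M →ₗ[A] M →ₗ[A] A) (E : Set (Module.End K M)) : Set (Module.End K M) :=
  {T | (∀ a : A, T * aId K a - aId K a * T ∈ E) ∧
       (∀ m n : M, T * aId K (q m n) - aId K (q m n) * T
          = EmapK K q (T m) n + EmapK K q (T n) m) ∧
       (∀ x ∈ E, ∃ b : A, T * x - x * T = aId K b)}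

variable (K) in
/-- `d = d_{S,T}`: the map `d` on `E_∞ = A × M × M × E` is given by
`d(a, m, n, x) = (σ_S(a) + τ_T(x), (S+T)(m), (S−T)(n), [T, a·id_M] + [S, x])`,
where `σ_S(a)·id_M = [S, a·id_M]` and `τ_T(x)·id_M = [T, x]`. -/
def isDST (q : M →ₗ[A] M →ₗ[A] A) (E : Submodule K (Module.End K M))
    (S T : Module.End K M) (d : (A × M × M × E) → (A × M × M × E)) : Prop :=
  ∀ (a : A) (m n : M) (x : Module.End K M) (hx : x ∈ E) (sa ta : A),
    S * aId K a - aId K a * S = aId K sa →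
    T * x - x * T = aId K ta →
    (d (a, m, n, ⟨x, hx⟩)).1 = sa + ta ∧
    (d (a, m, n, ⟨x, hx⟩)).2.1 = S m + T m ∧
    (d (a, m, n, ⟨x, hx⟩)).2.2.1 = S n - T n ∧
    ((d (a, m, n, ⟨x, hx⟩)).2.2.2 : Module.End K M)
      = (T * aId K a - aId K a * T) + (S * x - x * S)

/-!
Write `e = (1, 0, 0, 0)`. The operator `ad e` is `0` on `A × 0 × 0 × E`, `1` on the first copy
of `M` and `-1` on the second, so applying `d` to `[e, u]` (and dividing by `2`) shows that
`d - ad z`, where `d e = (_, m₀, n₀, _)` and `z = (0, -m₀, n₀, 0)`, respects these three pieces.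
On the two copies of `M` it acts by operators `B` and `C`; put `S = (B + C) / 2` and
`T = (B - C) / 2`. The derivation rule on `[(a, 0, 0, x), (0, m, 0, 0)] = (0, a m + x m, 0, 0)` and
on its analogue for the second copy computes `[B, a + x]` and `[C, x - a]` from `d (a, 0, 0, x)`,
which gives (S1), (S3), (T1), (T3) and identifies `σ_S`, `τ_T` (uniquely, as `M` is faithful).
The rule on `[(0, m, 0, 0), (0, 0, n, 0)] = (q(m, n), 0, 0, E_{m,n})`, symmetrised in `m` and `n`,
gives (S2) and (T2).
-/

section Halves

variable {K N : Type*} [Semiring K] [Invertible (2 : K)]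

lemma eq_invOf_two_smul_of_add_self_eq [AddCommMonoid N] [Module K N] {x y : N}
    (h : x + x = y) : x = (⅟2 : K) • y := by
  rw [← h, ← two_smul K x, smul_smul, invOf_mul_self, one_smul]

variable (K) in
lemma eq_zero_of_eq_neg_self [AddCommGroup N] [Module K N] {x : N} (h : x = -x) : x = 0 := by
  have hx : x + x = 0 := by nth_rw 2 [h]; exact add_neg_cancel x
  simpa using eq_invOf_two_smul_of_add_self_eq (K := K) hx

end Halves

section Faithful

variable {K A M : Type*} [CommRing K] [CommRing A] [AddCommGroup M] [Module A M] [Module K M]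
  [SMulCommClass K A M]

lemma aId_apply (a : A) (p : M) : aId K a p = a • p := rfl

@[simp]
lemma aId_zero : aId K (0 : A) = (0 : Module.End K M) :=
  zero_smul A 1

lemma aId_injective (hann : ∀ a : A, (∀ p : M, a • p = 0) → a = 0) :
    Function.Injective (aId K : A → Module.End K M) := fun b c h =>
  sub_eq_zero.mp <| hann _ fun p => by
    rw [sub_smul, ← aId_apply (K := K), ← aId_apply (K := K), h, sub_self]

end Faithful

section Bilinear

variable {K A M : Type*} [CommRing K] [CommRing A] [Algebra K A] [AddCommGroup M] [Module A M]
  [Module K M] [IsScalarTower K A M] (q : M →ₗ[A] M →ₗ[A] A)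

lemma EmapK_apply (m n p : M) : EmapK K q m n p = q n p • m - q m p • n := rfl

@[simp]
lemma EmapK_zero_left (n : M) : EmapK K q 0 n = 0 := by
  ext p; simp [EmapK_apply]

@[simp]
lemma EmapK_zero_right (m : M) : EmapK K q m 0 = 0 := by
  ext p; simp [EmapK_apply]

lemma EmapK_swap (m n : M) : EmapK K q n m = -EmapK K q m n := by
  ext p; simp [EmapK_apply]

lemma EmapK_add_right (m n n' : M) :
    EmapK K q m (n + n') = EmapK K q m n + EmapK K q m n' := by
  ext p; simp [EmapK_apply, add_smul]; abel

lemma EmapK_smul_right (k : K) (m n : M) : EmapK K q m (k • n) = k • EmapK K q m n := by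
  ext p; simp [EmapK_apply, smul_sub, smul_comm k]

lemma EmapK_neg_left (m n : M) : EmapK K q (-m) n = -EmapK K q m n := by
  ext p; simp [EmapK_apply]; abel

lemma EmapK_sub_left (m m' n : M) :
    EmapK K q (m - m') n = EmapK K q m n - EmapK K q m' n := by
  ext p; simp [EmapK_apply, sub_smul, smul_sub]; abel

lemma EmapK_smul_left (k : K) (m n : M) : EmapK K q (k • m) n = k • EmapK K q m n := by
  ext p; simp [EmapK_apply, smul_sub, smul_comm k]

variable (E : Submodule K (Module.End K M)) (hEe : ∀ m n : M, EmapK K q m n ∈ E)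
  (hbr : ∀ x ∈ E, ∀ y ∈ E, x * y - y * x ∈ E)

variable (K) in
noncomputable def adEinf (z : A × M × M × E) :
    (A × M × M × E) →ₗ[K] (A × M × M × E) where
  toFun := brEinf K q E hEe hbr z
  map_add' u v := by
    ext
    · simp [brEinf]; abel
    · simp [brEinf, smul_add, add_smul]; abel
    · simp [brEinf, smul_add, add_smul]; abel
    · simp [brEinf, EmapK_add_right, mul_add, add_mul]; abel
  map_smul' k u := by
    ext
    · simp [brEinf, smul_sub]
    · simp [brEinf, smul_sub, smul_comm k]
    · simp [brEinf, smul_sub, smul_comm k]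
    · simp [brEinf, EmapK_smul_right, smul_sub, smul_add]

-- `plus`, `minus` and `deg0` refer to elements `(0, m, 0, 0)`, `(0, 0, n, 0)` and `(a, 0, 0, x)`:
-- the eigenspaces of `ad (1, 0, 0, 0)` for the eigenvalues `1`, `-1` and `0`.
lemma brEinf_one_left (u : A × M × M × E) :
    brEinf K q E hEe hbr (1, 0, 0, 0) u = (0, u.2.1, -u.2.2.1, 0) := by
  ext <;> simp [brEinf]

lemma brEinf_plus_minus (m n : M) :
    brEinf K q E hEe hbr (0, m, 0, 0) (0, 0, n, 0)
      = (q m n, 0, 0, ⟨EmapK K q m n, hEe m n⟩) := by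
  ext <;> simp [brEinf]

lemma brEinf_deg0_plus (a : A) (x : E) (m : M) :
    brEinf K q E hEe hbr (a, 0, 0, x) (0, m, 0, 0)
      = (0, a • m + (x : Module.End K M) m, 0, 0) := by
  ext <;> simp [brEinf]

lemma brEinf_deg0_minus (a : A) (x : E) (n : M) :
    brEinf K q E hEe hbr (a, 0, 0, x) (0, 0, n, 0)
      = (0, 0, (x : Module.End K M) n - a • n, 0) := by
  ext <;> simp [brEinf, neg_add_eq_sub]

end Bilinear

section Blocks

variable {K A M X : Type*} [CommRing K] [AddCommGroup A] [Module K A] [AddCommGroup M]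
  [Module K M] [AddCommGroup X] [Module K X] (D : (A × M × M × X) →ₗ[K] (A × M × M × X))

def plusBlock : Module.End K M :=
  LinearMap.fst K M (M × X) ∘ₗ LinearMap.snd K A (M × M × X) ∘ₗ D ∘ₗ
    LinearMap.inr K A (M × M × X) ∘ₗ LinearMap.inl K M (M × X)

def minusBlock : Module.End K M :=
  LinearMap.fst K M X ∘ₗ LinearMap.snd K M (M × X) ∘ₗ LinearMap.snd K A (M × M × X) ∘ₗ D ∘ₗ
    LinearMap.inr K A (M × M × X) ∘ₗ LinearMap.inr K M (M × X) ∘ₗ LinearMap.inl K M X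

lemma plusBlock_apply (m : M) : plusBlock D m = (D (0, m, 0, 0)).2.1 := rfl

lemma minusBlock_apply (n : M) : minusBlock D n = (D (0, 0, n, 0)).2.2.1 := rfl

variable [Invertible (2 : K)]

def blockS : Module.End K M := (⅟2 : K) • (plusBlock D + minusBlock D)

def blockT : Module.End K M := (⅟2 : K) • (plusBlock D - minusBlock D)

lemma blockS_add_blockT : blockS D + blockT D = plusBlock D := by
  rw [blockS, blockT, ← smul_add]
  exact (eq_invOf_two_smul_of_add_self_eq (by abel)).symm

lemma blockS_sub_blockT : blockS D - blockT D = minusBlock D := by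
  rw [blockS, blockT, ← smul_sub]
  exact (eq_invOf_two_smul_of_add_self_eq (by abel)).symm

lemma commutator_blockS (Y : Module.End K M) :
    blockS D * Y - Y * blockS D = (⅟2 : K) •
      ((plusBlock D * Y - Y * plusBlock D) + (minusBlock D * Y - Y * minusBlock D)) := by
  simp only [blockS, smul_mul_assoc, mul_smul_comm, add_mul, mul_add, smul_add, smul_sub]
  abel

lemma commutator_blockT (Y : Module.End K M) :
    blockT D * Y - Y * blockT D = (⅟2 : K) •
      ((plusBlock D * Y - Y * plusBlock D) - (minusBlock D * Y - Y * minusBlock D)) := by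
  simp only [blockT, smul_mul_assoc, mul_smul_comm, sub_mul, mul_sub, smul_sub]
  abel

end Blocks

section Derivation

variable {K A M : Type*} [CommRing K] [CommRing A] [Algebra K A] [AddCommGroup M] [Module A M]
  [Module K M] [IsScalarTower K A M] {q : M →ₗ[A] M →ₗ[A] A} {E : Submodule K (Module.End K M)}
  {hEe : ∀ m n : M, EmapK K q m n ∈ E} {hbr : ∀ x ∈ E, ∀ y ∈ E, x * y - y * x ∈ E}
  {D : (A × M × M × E) →ₗ[K] (A × M × M × E)}

variable (D) in
def innerPart : A × M × M × E := (0, -(D (1, 0, 0, 0)).2.1, (D (1, 0, 0, 0)).2.2.1, 0)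

lemma map_q_add_self (hq : ∀ m n : M, q m n = q n m) (m n : M) :
    D (q m n, 0, 0, 0) + D (q m n, 0, 0, 0)
      = D (q m n, 0, 0, ⟨EmapK K q m n, hEe m n⟩)
        + D (q n m, 0, 0, ⟨EmapK K q n m, hEe n m⟩) := by
  rw [← map_add, ← map_add]
  congr 1
  ext <;> simp [hq n m, EmapK_swap q m n]

variable (hD : ∀ u v, D (brEinf K q E hEe hbr u v)
    = brEinf K q E hEe hbr (D u) v + brEinf K q E hEe hbr u (D v))
include hD

lemma derivation_ad_one (u : A × M × M × E) :
    D (0, u.2.1, -u.2.2.1, 0)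
      = brEinf K q E hEe hbr (D (1, 0, 0, 0)) u + (0, (D u).2.1, -(D u).2.2.1, 0) := by
  simpa only [brEinf_one_left] using hD (1, 0, 0, 0) u

lemma derivation_apply_deg0_plus (a : A) (x : E) :
    (D (a, 0, 0, x)).2.1
      = a • (D (1, 0, 0, 0)).2.1 + (x : Module.End K M) (D (1, 0, 0, 0)).2.1 := by
  have H := congrArg (·.2.1) (derivation_ad_one hD (a, 0, 0, x))
  simp [brEinf, Prod.mk_zero_zero] at H
  linear_combination (norm := module) -H

lemma derivation_apply_deg0_minus (a : A) (x : E) :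
    (D (a, 0, 0, x)).2.2.1
      = a • (D (1, 0, 0, 0)).2.2.1 - (x : Module.End K M) (D (1, 0, 0, 0)).2.2.1 := by
  have H := congrArg (·.2.2.1) (derivation_ad_one hD (a, 0, 0, x))
  simp [brEinf, Prod.mk_zero_zero] at H
  linear_combination (norm := module) H

lemma derivation_apply_q_Emap (m n : M) :
    (D (q m n, 0, 0, ⟨EmapK K q m n, hEe m n⟩)).1
        = q (plusBlock D m) n + q m (minusBlock D n) ∧
      ((D (q m n, 0, 0, ⟨EmapK K q m n, hEe m n⟩)).2.2.2 : Module.End K M)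
        = EmapK K q (plusBlock D m) n + EmapK K q m (minusBlock D n) := by
  have H := hD (0, m, 0, 0) (0, 0, n, 0)
  rw [brEinf_plus_minus] at H
  rw [H]
  constructor <;> simp [brEinf, plusBlock_apply, minusBlock_apply]

lemma commutator_plusBlock (a : A) (x : E) :
    plusBlock D * (aId K a + (x : Module.End K M))
        - (aId K a + (x : Module.End K M)) * plusBlock D
      = aId K (D (a, 0, 0, x)).1 + ((D (a, 0, 0, x)).2.2.2 : Module.End K M) := by
  ext p
  have H := hD (a, 0, 0, x) (0, p, 0, 0)
  rw [brEinf_deg0_plus] at H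
  have H1 := congrArg (·.2.1) H
  simp [brEinf] at H1
  simp [aId_apply, plusBlock_apply, H1]

lemma commutator_minusBlock (a : A) (x : E) :
    minusBlock D * ((x : Module.End K M) - aId K a)
        - ((x : Module.End K M) - aId K a) * minusBlock D
      = ((D (a, 0, 0, x)).2.2.2 : Module.End K M) - aId K (D (a, 0, 0, x)).1 := by
  ext p
  have H := hD (a, 0, 0, x) (0, 0, p, 0)
  rw [brEinf_deg0_minus] at H
  have H1 := congrArg (·.2.2.1) H
  simp [brEinf] at H1
  simp [aId_apply, minusBlock_apply, H1]
  abel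

variable [Invertible (2 : K)]

lemma derivation_apply_plus (m : M) :
    D (0, m, 0, 0) = (-q (D (1, 0, 0, 0)).2.2.1 m, plusBlock D m, 0,
      ⟨EmapK K q (D (1, 0, 0, 0)).2.2.1 m, hEe _ _⟩) := by
  have H := derivation_ad_one hD (0, m, 0, 0)
  refine Prod.ext ?_ (Prod.ext rfl (Prod.ext ?_ (Subtype.ext ?_)))
  · simpa [brEinf] using congrArg (·.1) H
  · exact eq_zero_of_eq_neg_self K (by simpa [brEinf] using congrArg (·.2.2.1) H)
  · simpa [brEinf] using congrArg (fun u : A × M × M × E => (u.2.2.2 : Module.End K M)) H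

lemma derivation_apply_minus (n : M) :
    D (0, 0, n, 0) = (-q (D (1, 0, 0, 0)).2.1 n, 0, minusBlock D n,
      -⟨EmapK K q (D (1, 0, 0, 0)).2.1 n, hEe _ _⟩) := by
  have H := derivation_ad_one hD (0, 0, n, 0)
  rw [show ((0 : A), (0 : M), -n, (0 : E)) = -(0, 0, n, 0) by simp, map_neg] at H
  refine Prod.ext ?_ (Prod.ext ?_ (Prod.ext rfl (Subtype.ext ?_)))
  · simpa [brEinf, neg_eq_iff_eq_neg] using congrArg (·.1) H
  · exact eq_zero_of_eq_neg_self K (by simpa [brEinf, eq_comm] using congrArg (·.2.1) H)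
  · simpa [brEinf, neg_eq_iff_eq_neg] using
      congrArg (fun u : A × M × M × E => (u.2.2.2 : Module.End K M)) H

lemma commutator_blockS_aId (a : A) :
    blockS D * aId K a - aId K a * blockS D = aId K (D (a, 0, 0, 0)).1 := by
  have hB := commutator_plusBlock hD a 0
  have hC := commutator_minusBlock hD a 0
  simp only [ZeroMemClass.coe_zero, add_zero, zero_sub, mul_neg, neg_mul] at hB hC
  rw [commutator_blockS]
  refine (eq_invOf_two_smul_of_add_self_eq ?_).symm
  linear_combination (norm := abel) hC - hB

lemma commutator_blockT_aId (a : A) :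
    blockT D * aId K a - aId K a * blockT D = ((D (a, 0, 0, 0)).2.2.2 : Module.End K M) := by
  have hB := commutator_plusBlock hD a 0
  have hC := commutator_minusBlock hD a 0
  simp only [ZeroMemClass.coe_zero, add_zero, zero_sub, mul_neg, neg_mul] at hB hC
  rw [commutator_blockT]
  refine (eq_invOf_two_smul_of_add_self_eq ?_).symm
  linear_combination (norm := abel) -hB - hC

lemma commutator_blockS_of_mem {x : Module.End K M} (hx : x ∈ E) :
    blockS D * x - x * blockS D = ((D (0, 0, 0, ⟨x, hx⟩)).2.2.2 : Module.End K M) := by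
  have hB := commutator_plusBlock hD 0 ⟨x, hx⟩
  have hC := commutator_minusBlock hD 0 ⟨x, hx⟩
  simp only [aId_zero, zero_add, sub_zero] at hB hC
  rw [commutator_blockS]
  refine (eq_invOf_two_smul_of_add_self_eq ?_).symm
  linear_combination (norm := abel) -hB - hC

lemma commutator_blockT_of_mem {x : Module.End K M} (hx : x ∈ E) :
    blockT D * x - x * blockT D = aId K (D (0, 0, 0, ⟨x, hx⟩)).1 := by
  have hB := commutator_plusBlock hD 0 ⟨x, hx⟩
  have hC := commutator_minusBlock hD 0 ⟨x, hx⟩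
  simp only [aId_zero, zero_add, sub_zero] at hB hC
  rw [commutator_blockT]
  refine (eq_invOf_two_smul_of_add_self_eq ?_).symm
  linear_combination (norm := abel) hC - hB

lemma derivation_apply_q_fst (hq : ∀ m n : M, q m n = q n m) (m n : M) :
    (D (q m n, 0, 0, 0)).1 = q (blockS D m) n + q (blockS D n) m := by
  have H := congrArg Prod.fst (map_q_add_self (D := D) (hEe := hEe) hq m n)
  simp only [Prod.fst_add, (derivation_apply_q_Emap hD _ _).1] at H
  rw [eq_invOf_two_smul_of_add_self_eq (K := K) H, hq m (minusBlock D n), hq n (minusBlock D m)]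
  simp only [blockS, LinearMap.smul_apply, LinearMap.add_apply, LinearMap.map_smul_of_tower,
    map_add, smul_add]
  abel

lemma derivation_apply_q_endo (hq : ∀ m n : M, q m n = q n m) (m n : M) :
    ((D (q m n, 0, 0, 0)).2.2.2 : Module.End K M)
      = EmapK K q (blockT D m) n + EmapK K q (blockT D n) m := by
  have H := congrArg (fun u : A × M × M × E => (u.2.2.2 : Module.End K M))
    (map_q_add_self (D := D) (hEe := hEe) hq m n)
  simp only [Prod.snd_add, Submodule.coe_add, (derivation_apply_q_Emap hD _ _).2] at H
  rw [eq_invOf_two_smul_of_add_self_eq (K := K) H, EmapK_swap q (minusBlock D n) m,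
    EmapK_swap q (minusBlock D m) n]
  simp only [blockT, LinearMap.smul_apply, LinearMap.sub_apply, EmapK_smul_left, EmapK_sub_left,
    smul_add, smul_sub]
  module

lemma blockS_mem_SE (hq : ∀ m n : M, q m n = q n m) :
    blockS D ∈ SE K q (E : Set (Module.End K M)) :=
  ⟨fun a => ⟨_, commutator_blockS_aId hD a⟩,
    fun m n => by rw [commutator_blockS_aId hD, derivation_apply_q_fst hD hq],
    fun _ hx => by rw [commutator_blockS_of_mem hD hx]; exact SetLike.coe_mem _⟩

lemma blockT_mem_TE (hq : ∀ m n : M, q m n = q n m) :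
    blockT D ∈ TE K q (E : Set (Module.End K M)) :=
  ⟨fun a => by rw [commutator_blockT_aId hD]; exact SetLike.coe_mem _,
    fun m n => by rw [commutator_blockT_aId hD, derivation_apply_q_endo hD hq],
    fun _ hx => ⟨_, commutator_blockT_of_mem hD hx⟩⟩

lemma isDST_sub_adEinf (hann : ∀ a : A, (∀ p : M, a • p = 0) → a = 0) :
    isDST K q E (blockS D) (blockT D) ⇑(D - adEinf K q E hEe hbr (innerPart D)) := by
  intro a m n x hx sa ta hsa hta
  rw [commutator_blockS_aId hD] at hsa
  rw [commutator_blockT_of_mem hD hx] at hta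
  obtain rfl := aId_injective hann hsa
  obtain rfl := aId_injective hann hta
  have hsplit : ((a, m, n, ⟨x, hx⟩) : A × M × M × E)
      = (a, 0, 0, 0) + (0, 0, 0, ⟨x, hx⟩) + (0, m, 0, 0) + (0, 0, n, 0) := by
    ext <;> simp
  rw [hsplit, commutator_blockT_aId hD, commutator_blockS_of_mem hD hx, ← LinearMap.add_apply,
    blockS_add_blockT, ← LinearMap.sub_apply, blockS_sub_blockT]
  simp only [LinearMap.sub_apply, map_add, derivation_apply_plus hD, derivation_apply_minus hD]
  refine ⟨?_, ?_, ?_, ?_⟩ <;>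
    simp [adEinf, innerPart, brEinf, derivation_apply_deg0_plus hD a 0,
      derivation_apply_deg0_plus hD 0 ⟨x, hx⟩, derivation_apply_deg0_minus hD a 0,
      derivation_apply_deg0_minus hD 0 ⟨x, hx⟩, EmapK_neg_left]

end Derivation

theorem stmt16_general (q : M →ₗ[A] M →ₗ[A] A) (hq : ∀ m n : M, q m n = q n m)
    (hann : ∀ a : A, (∀ p : M, a • p = 0) → a = 0)
    (E : Submodule K (Module.End K M))
    (hEe : ∀ m n : M, EmapK K q m n ∈ E)
    (hbr : ∀ x ∈ E, ∀ y ∈ E, x * y - y * x ∈ E) :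
    ∀ d : (A × M × M × E) → (A × M × M × E), IsLinearMap K d →
      (∀ u v, d (brEinf K q E hEe hbr u v)
          = brEinf K q E hEe hbr (d u) v + brEinf K q E hEe hbr u (d v)) →
      ∃ (z : A × M × M × E) (S T : Module.End K M)
        (d' : (A × M × M × E) → (A × M × M × E)),
        S ∈ SE K q (E : Set (Module.End K M)) ∧
        T ∈ TE K q (E : Set (Module.End K M)) ∧
        IsLinearMap K d' ∧ isDST K q E S T d' ∧
        ∀ u, d u = brEinf K q E hEe hbr z u + d' u := by
  intro d hlin hder
  let D := hlin.mk' d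
  exact ⟨innerPart D, blockS D, blockT D, ⇑(D - adEinf K q E hEe hbr (innerPart D)),
    blockS_mem_SE hder hq, blockT_mem_TE hder hq, LinearMap.isLinear _,
    isDST_sub_adEinf hder hann, fun u => (add_sub_cancel _ _).symm⟩

/-- assume `Ann_A(M) = 0`. Every `K`-derivation `d` of
`L = E_∞` can be written as `d = ad(z) + d_{S,T}` for some `z ∈ L`,
`S ∈ S_E` and `T ∈ T_E`. -/
theorem stmt16 (q : M →ₗ[A] M →ₗ[A] A) (hq : ∀ m n : M, q m n = q n m)
    (hann : ∀ a : A, (∀ p : M, a • p = 0) → a = 0)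
    (E : Submodule K (Module.End K M))
    (hEe : ∀ m n : M, EmapK K q m n ∈ E)
    (hEo : (E : Set (Module.End K M)) ⊆ ospK K q)
    (hbr : ∀ x ∈ E, ∀ y ∈ E, x * y - y * x ∈ E) :
    ∀ d : (A × M × M × E) → (A × M × M × E), IsLinearMap K d →
      (∀ u v, d (brEinf K q E hEe hbr u v)
          = brEinf K q E hEe hbr (d u) v + brEinf K q E hEe hbr u (d v)) →
      ∃ (z : A × M × M × E) (S T : Module.End K M)
        (d' : (A × M × M × E) → (A × M × M × E)),
        S ∈ SE K q (E : Set (Module.End K M)) ∧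
        T ∈ TE K q (E : Set (Module.End K M)) ∧
        IsLinearMap K d' ∧ isDST K q E S T d' ∧
        ∀ u, d u = brEinf K q E hEe hbr z u + d' u :=
  stmt16_general q hq hann E hEe hbr
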